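/- If λ ≥ 2μZ_f², then for any minimizer α* of the sketched program, the approximate solution x̃ = −λ⁻¹Aᵀ∇f(ASα*) satisfies ‖x̃ − x*‖₂ ≤ √(μ/(2λ)) · Z_f · ‖x*‖₂. -/

import Mathlib

open Matrix Finset Real Set

noncomputable section

namespace Sketch

/-- The ℓ2 norm of a vector in `Fin k → ℝ`. -/
def norm2 {k : ℕ} (x : Fin k → ℝ) : ℝ := Real.sqrt (∑ i, x i ^ 2)

/-- The continuous linear functional `v ↦ ⟨w, v⟩`; used to state that a function has
gradient `w` at a point. -/
def dotCLM {k : ℕ} (w : Fin k → ℝ) : (Fin k → ℝ) →L[ℝ] ℝ :=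
  LinearMap.toContinuousLinearMap
    { toFun := fun v => w ⬝ᵥ v
      map_add' := fun a b => dotProduct_add w a b
      map_smul' := fun c a => by
        simp [dotProduct, Finset.mul_sum, mul_left_comm] }

/-- The domain of the Fenchel conjugate `f*`. -/
def fenchelDom {k : ℕ} (f : (Fin k → ℝ) → ℝ) : Set (Fin k → ℝ) :=
  {z | BddAbove (Set.range fun w => w ⬝ᵥ z - f w)}

/-- The Fenchel conjugate `f*(z) = sup_w (⟨w, z⟩ - f(w))` (as a real-valued supremum,
meaningful on `fenchelDom f`). -/
def fenchel {k : ℕ} (f : (Fin k → ℝ) → ℝ) (z : Fin k → ℝ) : ℝ :=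
  ⨆ w, (w ⬝ᵥ z - f w)

/-- The subdifferential of the Fenchel conjugate `f*` at `z`. -/
def fenchelSubdiff {k : ℕ} (f : (Fin k → ℝ) → ℝ) (z : Fin k → ℝ) : Set (Fin k → ℝ) :=
  {g | ∀ y ∈ fenchelDom f, fenchel f z + g ⬝ᵥ (y - z) ≤ fenchel f y}

/-- `P` is the orthogonal projector onto the range (column space) of `S`. -/
def IsOrthProj {q m : ℕ} (S : Matrix (Fin q) (Fin m) ℝ) (P : Matrix (Fin q) (Fin q) ℝ) : Prop :=
  Pᵀ = P ∧ P * P = P ∧ P * S = S ∧ ∃ C : Matrix (Fin m) (Fin q) ℝ, P = S * C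

/-- The quantity `Z_f`: the supremum of `(Δᵀ B P⊥ Bᵀ Δ)^{1/2} / ‖Δ‖₂` over nonzero
`Δ ∈ dom f* - z*`. -/
def Zf {k q : ℕ} (f : (Fin k → ℝ) → ℝ) (B : Matrix (Fin k) (Fin q) ℝ)
    (Pperp : Matrix (Fin q) (Fin q) ℝ) (zs : Fin k → ℝ) : ℝ :=
  sSup {r | ∃ Δ : Fin k → ℝ, Δ ≠ 0 ∧ zs + Δ ∈ fenchelDom f ∧
    r = Real.sqrt (Δ ⬝ᵥ (B * Pperp * Bᵀ).mulVec Δ) / norm2 Δ}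

/-- The spectral norm (largest singular value) of a matrix. -/
def specNorm {a b : ℕ} (M : Matrix (Fin a) (Fin b) ℝ) : ℝ :=
  sSup {r | ∃ v : Fin b → ℝ, norm2 v = 1 ∧ r = norm2 (M.mulVec v)}

/-- The eigenvalues of `A * Aᵀ` (i.e. the squared singular values of `A`),
sorted in decreasing order. -/
def eigsDesc {n d : ℕ} (A : Matrix (Fin n) (Fin d) ℝ) : Fin n → ℝ := fun i =>
  ((Matrix.isHermitian_mul_conjTranspose_self A).eigenvalues ∘
    Tuple.sort (Matrix.isHermitian_mul_conjTranspose_self A).eigenvalues) i.rev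

/-- The spectral tail `R_k(A) = (σ_k² + (1/k) ∑_{j=k+1}^ρ σ_j²)^{1/2}`. -/
def Rk {n d : ℕ} (A : Matrix (Fin n) (Fin d) ℝ) (k : ℕ) : ℝ :=
  Real.sqrt ((∑ j : Fin n, if (j : ℕ) + 1 = k then eigsDesc A j else 0)
    + (1 / (k : ℝ)) * ∑ j : Fin n, if k ≤ (j : ℕ) then eigsDesc A j else 0)

/-- Product measure on `n × m` matrices with i.i.d. standard Gaussian entries. -/
def gaussMatrix (n m : ℕ) : MeasureTheory.Measure (Fin n → Fin m → ℝ) :=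
  MeasureTheory.Measure.pi fun _ => MeasureTheory.Measure.pi fun _ =>
    ProbabilityTheory.gaussianReal 0 1


/-- The largest eigenvalue (Rayleigh quotient supremum) of a symmetric matrix. -/
def eigMax {q : ℕ} (M : Matrix (Fin q) (Fin q) ℝ) : ℝ :=
  sSup {r | ∃ v : Fin q → ℝ, norm2 v = 1 ∧ r = v ⬝ᵥ M.mulVec v}

/-- The smallest eigenvalue (Rayleigh quotient infimum) of a symmetric matrix. -/
def eigMin {q : ℕ} (M : Matrix (Fin q) (Fin q) ℝ) : ℝ :=
  sInf {r | ∃ v : Fin q → ℝ, norm2 v = 1 ∧ r = v ⬝ᵥ M.mulVec v}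

end Sketch

/-!
Write `z* = ∇f(Ax*)`, `z̃ = ∇f(ASα*)`, `Δ = z̃ - z*` and `y = AᵀΔ`. The optimality condition
`Aᵀz* = -λx*` of the full problem gives `x̃ - x* = -λ⁻¹ y`, and that of the sketched problem
gives `P Aᵀz̃ = -λ Sα*`, so `λ (Sα* - x*) = -P y - λ P⊥ x*`. Pairing this with the
co-coercivity `‖Δ‖² ≤ μ ⟨Δ, A(Sα* - x*)⟩` of `∇f` yields
`λ ‖Δ‖² + μ ‖P y‖² ≤ μ λ ‖x*‖ ‖P⊥ y‖`. As `z̃ ∈ dom f*`, the definition of `Z_f` gives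
`‖P⊥ y‖ ≤ Z_f ‖Δ‖`, and eliminating `‖Δ‖` with `λ ≥ 2 μ Z_f²` bounds
`‖y‖² = ‖P y‖² + ‖P⊥ y‖²` by `λ μ Z_f² ‖x*‖² / 2`.
-/

open scoped InnerProductSpace

section SmoothConvex

variable {E : Type*} [NormedAddCommGroup E] [InnerProductSpace ℝ E] [CompleteSpace E]
  {f : E → ℝ} {f' : E → E} {μ : ℝ}

lemma hasDerivAt_comp_add_smul (hf : ∀ x, HasGradientAt f (f' x) x) (x d : E) (t : ℝ) :
    HasDerivAt (fun s : ℝ => f (x + s • d)) ⟪f' (x + t • d), d⟫_ℝ t := by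
  have hline : HasDerivAt (fun s : ℝ => x + s • d) d t := by
    simpa using ((hasDerivAt_id t).smul_const d).const_add x
  exact (hf (x + t • d)).hasFDerivAt.comp_hasDerivAt t hline

lemma ConvexOn.add_inner_gradient_le (hconv : ConvexOn ℝ Set.univ f)
    (hf : ∀ x, HasGradientAt f (f' x) x) (x y : E) : f x + ⟪f' x, y - x⟫_ℝ ≤ f y := by
  have hline : ConvexOn ℝ Set.univ (fun s : ℝ => f (x + s • (y - x))) := by
    simpa [Function.comp_def, AffineMap.lineMap_apply_module', add_comm]
      using hconv.comp_affineMap (AffineMap.lineMap x y)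
  have hslope := hline.le_slope_of_hasDerivAt (Set.mem_univ 0) (Set.mem_univ 1) one_pos
    (by simpa using hasDerivAt_comp_add_smul hf x (y - x) 0)
  simp only [slope_def_field, one_smul, add_sub_cancel, zero_smul, add_zero, sub_zero,
    div_one] at hslope
  linarith

lemma le_add_inner_gradient_add_sq (hf : ∀ x, HasGradientAt f (f' x) x)
    (hL : ∀ x y, ‖f' x - f' y‖ ≤ μ * ‖x - y‖) (x y : E) :
    f y ≤ f x + ⟪f' x, y - x⟫_ℝ + μ / 2 * ‖y - x‖ ^ 2 := by
  set d := y - x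
  let φ : ℝ → ℝ := fun t => f (x + t • d) - t * ⟪f' x, d⟫_ℝ - μ / 2 * t ^ 2 * ‖d‖ ^ 2
  have hφ : ∀ t, HasDerivAt φ (⟪f' (x + t • d) - f' x, d⟫_ℝ - μ * t * ‖d‖ ^ 2) t := fun t =>
    (((hasDerivAt_comp_add_smul hf x d t).sub
      ((hasDerivAt_id t).mul_const ⟪f' x, d⟫_ℝ)).sub
      (((hasDerivAt_pow 2 t).const_mul (μ / 2)).mul_const (‖d‖ ^ 2))).congr_deriv
      (by rw [inner_sub_left]; ring)
  have hφ_nonpos : ∀ t ∈ interior (Set.Icc (0 : ℝ) 1), deriv φ t ≤ 0 := by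
    intro t ht
    rw [interior_Icc] at ht
    have hlip : ‖f' (x + t • d) - f' x‖ ≤ μ * (t * ‖d‖) := by
      simpa [norm_smul, abs_of_pos ht.1] using hL (x + t • d) x
    rw [(hφ t).deriv]
    nlinarith [real_inner_le_norm (f' (x + t • d) - f' x) d, norm_nonneg d]
  have hanti : AntitoneOn φ (Set.Icc 0 1) :=
    antitoneOn_of_deriv_nonpos (convex_Icc 0 1)
      (fun t _ => (hφ t).continuousAt.continuousWithinAt)
      (fun t _ => (hφ t).differentiableAt.differentiableWithinAt) hφ_nonpos
  have h0 : φ 0 = f x := by simp [φ]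
  have h1 : φ 1 = f y - ⟪f' x, y - x⟫_ℝ - μ / 2 * ‖y - x‖ ^ 2 := by simp [φ, d]
  linarith [hanti (by simp) (by simp) zero_le_one]

lemma ConvexOn.add_inner_gradient_add_sq_div_le (hconv : ConvexOn ℝ Set.univ f) (hμ : 0 < μ)
    (hf : ∀ x, HasGradientAt f (f' x) x) (hL : ∀ x y, ‖f' x - f' y‖ ≤ μ * ‖x - y‖) (x y : E) :
    f x + ⟪f' x, y - x⟫_ℝ + ‖f' y - f' x‖ ^ 2 / (2 * μ) ≤ f y := by
  set D := f' y - f' x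
  -- compare the lower bound at `x` with the upper bound at `y`, both evaluated at `z`
  set z := y - μ⁻¹ • D
  have hlow := hconv.add_inner_gradient_le hf x z
  have hup := le_add_inner_gradient_add_sq hf hL y z
  have hsq : μ / 2 * (μ⁻¹ * ‖D‖) ^ 2 = ‖D‖ ^ 2 / (2 * μ) := by field_simp
  have hD : ⟪f' y, D⟫_ℝ - ⟪f' x, D⟫_ℝ = ‖D‖ ^ 2 := by
    rw [← inner_sub_left, real_inner_self_eq_norm_sq]
  have hlin : μ⁻¹ * ⟪f' y, D⟫_ℝ - μ⁻¹ * ⟪f' x, D⟫_ℝ = 2 * (‖D‖ ^ 2 / (2 * μ)) := by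
    rw [← mul_sub, hD]
    field_simp
  simp only [z, show y - μ⁻¹ • D - x = (y - x) - μ⁻¹ • D by abel, sub_sub_cancel_left,
    inner_sub_right, inner_neg_right, inner_smul_right, norm_neg, norm_smul,
    Real.norm_eq_abs, abs_inv, abs_of_pos hμ] at hlow hup ⊢
  linarith

lemma ConvexOn.sq_norm_gradient_sub_le (hconv : ConvexOn ℝ Set.univ f) (hμ : 0 < μ)
    (hf : ∀ x, HasGradientAt f (f' x) x) (hL : ∀ x y, ‖f' x - f' y‖ ≤ μ * ‖x - y‖) (x y : E) :
    ‖f' y - f' x‖ ^ 2 ≤ μ * ⟪f' y - f' x, y - x⟫_ℝ := by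
  have hxy := hconv.add_inner_gradient_add_sq_div_le hμ hf hL x y
  have hyx := hconv.add_inner_gradient_add_sq_div_le hμ hf hL y x
  rw [← neg_sub y x, inner_neg_right, norm_sub_rev] at hyx
  rw [show ‖f' y - f' x‖ ^ 2 / (2 * μ) = ‖f' y - f' x‖ ^ 2 / μ / 2 by ring] at hxy hyx
  have h : ‖f' y - f' x‖ ^ 2 / μ ≤ ⟪f' y - f' x, y - x⟫_ℝ := by
    rw [inner_sub_left]
    linarith
  rwa [div_le_iff₀' hμ] at h

end SmoothConvex

namespace Sketch

section Norm2

variable {k : ℕ}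

lemma dotCLM_apply (w v : Fin k → ℝ) : dotCLM w v = w ⬝ᵥ v := rfl

lemma norm2_eq_norm (v : Fin k → ℝ) : norm2 v = ‖WithLp.toLp 2 v‖ := by
  rw [EuclideanSpace.norm_eq]
  simp [norm2]

lemma dotProduct_eq_inner (v w : Fin k → ℝ) :
    v ⬝ᵥ w = ⟪WithLp.toLp 2 v, WithLp.toLp 2 w⟫_ℝ := by
  simp [EuclideanSpace.inner_toLp_toLp, dotProduct_comm]

lemma norm2_nonneg (v : Fin k → ℝ) : 0 ≤ norm2 v := Real.sqrt_nonneg _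

lemma norm2_pos {v : Fin k → ℝ} (hv : v ≠ 0) : 0 < norm2 v := by
  rw [norm2_eq_norm]
  exact norm_pos_iff.2 (by simpa using hv)

lemma norm2_sq (v : Fin k → ℝ) : norm2 v ^ 2 = v ⬝ᵥ v := by
  rw [norm2_eq_norm, dotProduct_eq_inner, real_inner_self_eq_norm_sq]

lemma norm2_eq_sqrt_dotProduct (v : Fin k → ℝ) : norm2 v = Real.sqrt (v ⬝ᵥ v) := by
  rw [← norm2_sq, Real.sqrt_sq (norm2_nonneg v)]

lemma norm2_neg (v : Fin k → ℝ) : norm2 (-v) = norm2 v := by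
  simp [norm2]

lemma norm2_smul (c : ℝ) (v : Fin k → ℝ) : norm2 (c • v) = |c| * norm2 v := by
  simp [norm2_eq_norm, norm_smul]

lemma dotProduct_le_norm2_mul_norm2 (v w : Fin k → ℝ) : v ⬝ᵥ w ≤ norm2 v * norm2 w := by
  rw [dotProduct_eq_inner, norm2_eq_norm, norm2_eq_norm]
  exact real_inner_le_norm _ _

lemma exists_norm2_mulVec_le {q : ℕ} (M : Matrix (Fin k) (Fin q) ℝ) :
    ∃ C, ∀ v, norm2 (M *ᵥ v) ≤ C * norm2 v := by
  open scoped Matrix.Norms.L2Operator in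
  exact ⟨‖M‖, fun v => by simpa [norm2_eq_norm] using M.l2_opNorm_mulVec (WithLp.toLp 2 v)⟩

end Norm2

section SmoothConvexCoordinates

variable {k : ℕ} {f : (Fin k → ℝ) → ℝ} {f' : (Fin k → ℝ) → Fin k → ℝ} {μ : ℝ}

lemma convexOn_comp_ofLp (hconv : ConvexOn ℝ Set.univ f) :
    ConvexOn ℝ Set.univ (fun x : EuclideanSpace ℝ (Fin k) => f x.ofLp) :=
  hconv.comp_linearMap (WithLp.linearEquiv 2 ℝ (Fin k → ℝ)).toLinearMap

lemma hasGradientAt_comp_ofLp (hdiff : ∀ w, HasFDerivAt f (dotCLM (f' w)) w)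
    (x : EuclideanSpace ℝ (Fin k)) :
    HasGradientAt (fun x : EuclideanSpace ℝ (Fin k) => f x.ofLp)
      (WithLp.toLp 2 (f' x.ofLp)) x := by
  rw [hasGradientAt_iff_hasFDerivAt]
  refine ((hdiff x.ofLp).comp x (EuclideanSpace.equiv (Fin k) ℝ).hasFDerivAt).congr_fderiv ?_
  ext v
  exact dotProduct_comm (f' x.ofLp) v.ofLp

lemma add_dotProduct_grad_le (hconv : ConvexOn ℝ Set.univ f)
    (hdiff : ∀ w, HasFDerivAt f (dotCLM (f' w)) w) (v w : Fin k → ℝ) :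
    f v + f' v ⬝ᵥ (w - v) ≤ f w := by
  have h := (convexOn_comp_ofLp hconv).add_inner_gradient_le
    (hasGradientAt_comp_ofLp hdiff) (WithLp.toLp 2 v) (WithLp.toLp 2 w)
  simpa only [WithLp.ofLp_toLp, ← WithLp.toLp_sub, ← dotProduct_eq_inner] using h

lemma dotProduct_grad_sub_le (hμ : 0 < μ) (hconv : ConvexOn ℝ Set.univ f)
    (hdiff : ∀ w, HasFDerivAt f (dotCLM (f' w)) w)
    (hsmooth : ∀ w v, norm2 (f' w - f' v) ≤ μ * norm2 (w - v)) (v w : Fin k → ℝ) :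
    (f' w - f' v) ⬝ᵥ (f' w - f' v) ≤ μ * ((f' w - f' v) ⬝ᵥ (w - v)) := by
  have hL : ∀ x y : EuclideanSpace ℝ (Fin k),
      ‖WithLp.toLp 2 (f' x.ofLp) - WithLp.toLp 2 (f' y.ofLp)‖ ≤ μ * ‖x - y‖ := fun x y => by
    simpa [norm2_eq_norm] using hsmooth x.ofLp y.ofLp
  have h := (convexOn_comp_ofLp hconv).sq_norm_gradient_sub_le hμ
    (hasGradientAt_comp_ofLp hdiff) hL (WithLp.toLp 2 v) (WithLp.toLp 2 w)
  simpa only [WithLp.ofLp_toLp, ← WithLp.toLp_sub, ← norm2_eq_norm, norm2_sq,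
    ← dotProduct_eq_inner] using h

lemma grad_mem_fenchelDom (hconv : ConvexOn ℝ Set.univ f)
    (hdiff : ∀ w, HasFDerivAt f (dotCLM (f' w)) w) (v : Fin k → ℝ) : f' v ∈ fenchelDom f := by
  refine ⟨v ⬝ᵥ f' v - f v, ?_⟩
  rintro _ ⟨w, rfl⟩
  have h := add_dotProduct_grad_le hconv hdiff v w
  rw [dotProduct_sub] at h
  simp only [dotProduct_comm _ (f' v)]
  linarith

end SmoothConvexCoordinates

section FirstOrder

variable {k q p : ℕ}

lemma eq_zero_of_dotCLM_eq_zero {g : Fin k → ℝ} (h : dotCLM g = 0) : g = 0 :=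
  dotProduct_self_eq_zero.1 (congrArg (fun L => L g) h)

lemma hasFDerivAt_comp_mulVec {g : (Fin k → ℝ) → ℝ} {w : Fin k → ℝ}
    (M : Matrix (Fin k) (Fin q) ℝ) {x : Fin q → ℝ} (h : HasFDerivAt g (dotCLM w) (M *ᵥ x)) :
    HasFDerivAt (fun y => g (M *ᵥ y)) (dotCLM (Mᵀ *ᵥ w)) x := by
  refine (h.comp x M.mulVecLin.toContinuousLinearMap.hasFDerivAt).congr_fderiv ?_
  ext v
  simp [dotCLM_apply, dotProduct_transpose_mulVec, dotProduct_comm]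

lemma hasFDerivAt_dotProduct_self (x : Fin k → ℝ) :
    HasFDerivAt (fun y => y ⬝ᵥ y) (dotCLM ((2 : ℝ) • x)) x := by
  refine (HasFDerivAt.fun_sum (u := Finset.univ)
    fun i _ => (hasFDerivAt_apply i x).mul (hasFDerivAt_apply i x)).congr_fderiv ?_
  ext v
  simp only [_root_.sum_apply, _root_.add_apply, _root_.smul_apply,
    ContinuousLinearMap.proj_apply, smul_eq_mul, dotCLM_apply, dotProduct, Pi.smul_apply]
  exact Finset.sum_congr rfl fun i _ => by ring

variable {f : (Fin k → ℝ) → ℝ} {f' : (Fin k → ℝ) → Fin k → ℝ}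

lemma transpose_mulVec_grad_add_eq_zero (hdiff : ∀ w, HasFDerivAt f (dotCLM (f' w)) w)
    (M : Matrix (Fin k) (Fin q) ℝ) (N : Matrix (Fin p) (Fin q) ℝ) (lam : ℝ) {α₀ : Fin q → ℝ}
    (hmin : ∀ α, f (M *ᵥ α₀) + lam / 2 * norm2 (N *ᵥ α₀) ^ 2
      ≤ f (M *ᵥ α) + lam / 2 * norm2 (N *ᵥ α) ^ 2) :
    Mᵀ *ᵥ f' (M *ᵥ α₀) + lam • (Nᵀ *ᵥ (N *ᵥ α₀)) = 0 := by
  simp only [norm2_sq] at hmin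
  have hderiv := (hasFDerivAt_comp_mulVec M (x := α₀) (hdiff _)).add
    ((hasFDerivAt_comp_mulVec N (x := α₀) (hasFDerivAt_dotProduct_self _)).const_mul (lam / 2))
  refine eq_zero_of_dotCLM_eq_zero
    (IsLocalMin.hasFDerivAt_eq_zero (Filter.Eventually.of_forall hmin) (hderiv.congr_fderiv ?_))
  ext v
  simp only [_root_.add_apply, _root_.smul_apply, dotCLM_apply,
    add_dotProduct, smul_dotProduct, mulVec_smul, smul_eq_mul]
  ring

end FirstOrder

section Projection

variable {q m : ℕ} {Q P : Matrix (Fin q) (Fin q) ℝ} {S : Matrix (Fin q) (Fin m) ℝ}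

lemma dotProduct_mulVec_of_isSymm (hQ : Q.IsSymm) (x y : Fin q → ℝ) :
    x ⬝ᵥ Q *ᵥ y = Q *ᵥ x ⬝ᵥ y := by
  conv_lhs => rw [← hQ.eq]
  rw [dotProduct_transpose_mulVec, dotProduct_comm]

lemma dotProduct_mulVec_self_of_isSymm (hQ : Q.IsSymm) (hQQ : IsIdempotentElem Q)
    (y : Fin q → ℝ) : y ⬝ᵥ Q *ᵥ y = Q *ᵥ y ⬝ᵥ Q *ᵥ y := by
  rw [dotProduct_mulVec_of_isSymm hQ (Q *ᵥ y), mulVec_mulVec, hQQ.eq, dotProduct_comm]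

lemma norm2_sq_eq_add_of_isSymm (hQ : Q.IsSymm) (hQQ : IsIdempotentElem Q) (y : Fin q → ℝ) :
    norm2 y ^ 2 = norm2 (Q *ᵥ y) ^ 2 + norm2 ((1 - Q) *ᵥ y) ^ 2 := by
  rw [norm2_sq, norm2_sq, norm2_sq, ← dotProduct_mulVec_self_of_isSymm hQ hQQ,
    ← dotProduct_mulVec_self_of_isSymm (isSymm_one.sub hQ) hQQ.one_sub, ← dotProduct_add,
    ← add_mulVec, add_sub_cancel, one_mulVec]

namespace IsOrthProj

lemma isSymm (hP : IsOrthProj S P) : P.IsSymm := hP.1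

lemma isIdempotentElem (hP : IsOrthProj S P) : IsIdempotentElem P := hP.2.1

lemma mulVec_mulVec_eq (hP : IsOrthProj S P) (α : Fin m → ℝ) : P *ᵥ (S *ᵥ α) = S *ᵥ α := by
  rw [mulVec_mulVec, hP.2.2.1]

lemma mulVec_eq_zero (hP : IsOrthProj S P) {y : Fin q → ℝ} (hy : Sᵀ *ᵥ y = 0) :
    P *ᵥ y = 0 := by
  obtain ⟨C, hC⟩ := hP.2.2.2
  rw [← hP.isSymm.eq, hC, transpose_mul, ← mulVec_mulVec, hy, mulVec_zero]

end IsOrthProj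

end Projection

section OptimalityConditions

variable {n d m : ℕ} {f : (Fin n → ℝ) → ℝ} {f' : (Fin n → ℝ) → Fin n → ℝ}
  {A : Matrix (Fin n) (Fin d) ℝ} {lam : ℝ}

lemma transpose_mulVec_grad_eq_of_isMin (hdiff : ∀ w, HasFDerivAt f (dotCLM (f' w)) w)
    {xs : Fin d → ℝ} (hxs : ∀ x, f (A *ᵥ xs) + lam / 2 * norm2 xs ^ 2
      ≤ f (A *ᵥ x) + lam / 2 * norm2 x ^ 2) :
    Aᵀ *ᵥ f' (A *ᵥ xs) = -lam • xs := by
  have hmin : ∀ x, f (A *ᵥ xs) + lam / 2 * norm2 ((1 : Matrix (Fin d) (Fin d) ℝ) *ᵥ xs) ^ 2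
      ≤ f (A *ᵥ x) + lam / 2 * norm2 ((1 : Matrix (Fin d) (Fin d) ℝ) *ᵥ x) ^ 2 := by
    simpa only [one_mulVec] using hxs
  have h := transpose_mulVec_grad_add_eq_zero hdiff A 1 lam hmin
  rwa [transpose_one, one_mulVec, one_mulVec, ← eq_neg_iff_add_eq_zero, ← neg_smul] at h

lemma proj_transpose_mulVec_grad_eq_of_isMin (hdiff : ∀ w, HasFDerivAt f (dotCLM (f' w)) w)
    {S : Matrix (Fin d) (Fin m) ℝ} {P : Matrix (Fin d) (Fin d) ℝ} (hP : IsOrthProj S P)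
    {αs : Fin m → ℝ} (hαs : ∀ α, f ((A * S) *ᵥ αs) + lam / 2 * norm2 (S *ᵥ αs) ^ 2
      ≤ f ((A * S) *ᵥ α) + lam / 2 * norm2 (S *ᵥ α) ^ 2) :
    P *ᵥ (Aᵀ *ᵥ f' ((A * S) *ᵥ αs)) = -lam • (S *ᵥ αs) := by
  have h := transpose_mulVec_grad_add_eq_zero hdiff (A * S) S lam hαs
  rw [transpose_mul, ← mulVec_mulVec, ← mulVec_smul, ← mulVec_add] at h
  have hP0 := hP.mulVec_eq_zero h
  rw [mulVec_add, mulVec_smul, hP.mulVec_mulVec_eq] at hP0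
  rw [neg_smul, eq_neg_iff_add_eq_zero, hP0]

lemma smul_sub_eq_of_optimality {S : Matrix (Fin d) (Fin m) ℝ} {P : Matrix (Fin d) (Fin d) ℝ}
    {xs : Fin d → ℝ} {αs : Fin m → ℝ} {zs zt : Fin n → ℝ} (hprimal : Aᵀ *ᵥ zs = -lam • xs)
    (hsketch : P *ᵥ (Aᵀ *ᵥ zt) = -lam • (S *ᵥ αs)) :
    lam • (S *ᵥ αs - xs) = -(P *ᵥ (Aᵀ *ᵥ (zt - zs))) - lam • ((1 - P) *ᵥ xs) := by
  rw [mulVec_sub, mulVec_sub, hsketch, hprimal, mulVec_smul, sub_mulVec, one_mulVec]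
  module

lemma neg_inv_smul_sub_eq {xs : Fin d → ℝ} {zs zt : Fin n → ℝ} (hlam : lam ≠ 0)
    (hprimal : Aᵀ *ᵥ zs = -lam • xs) :
    -(lam⁻¹ • Aᵀ *ᵥ zt) - xs = (-lam⁻¹) • (Aᵀ *ᵥ (zt - zs)) := by
  rw [mulVec_sub, hprimal, smul_sub, smul_smul, neg_mul_neg, inv_mul_cancel₀ hlam, one_smul,
    neg_smul]

end OptimalityConditions

section ConjugateDomain

variable {k q : ℕ} {f : (Fin k → ℝ) → ℝ} {B : Matrix (Fin k) (Fin q) ℝ}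
  {Q : Matrix (Fin q) (Fin q) ℝ}

lemma dotProduct_mul_mul_transpose_mulVec (hQ : Q.IsSymm) (hQQ : IsIdempotentElem Q)
    (Δ : Fin k → ℝ) : Δ ⬝ᵥ (B * Q * Bᵀ) *ᵥ Δ = Q *ᵥ (Bᵀ *ᵥ Δ) ⬝ᵥ Q *ᵥ (Bᵀ *ᵥ Δ) := by
  rw [← mulVec_mulVec, ← mulVec_mulVec, dotProduct_mulVec, ← mulVec_transpose,
    dotProduct_mulVec_self_of_isSymm hQ hQQ]

lemma Zf_nonneg (zs : Fin k → ℝ) : 0 ≤ Zf f B Q zs :=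
  Real.sSup_nonneg <| by
    rintro _ ⟨Δ, -, -, rfl⟩
    exact div_nonneg (Real.sqrt_nonneg _) (norm2_nonneg Δ)

lemma norm2_mulVec_le_Zf_mul (hQ : Q.IsSymm) (hQQ : IsIdempotentElem Q) {zs Δ : Fin k → ℝ}
    (hΔ : zs + Δ ∈ fenchelDom f) : norm2 (Q *ᵥ (Bᵀ *ᵥ Δ)) ≤ Zf f B Q zs * norm2 Δ := by
  have hratio : ∀ Δ' : Fin k → ℝ, Real.sqrt (Δ' ⬝ᵥ (B * Q * Bᵀ) *ᵥ Δ') / norm2 Δ'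
      = norm2 (Q *ᵥ (Bᵀ *ᵥ Δ')) / norm2 Δ' := fun Δ' => by
    rw [dotProduct_mul_mul_transpose_mulVec hQ hQQ, ← norm2_eq_sqrt_dotProduct]
  obtain ⟨C, hC⟩ := exists_norm2_mulVec_le (Q * Bᵀ)
  have hbdd : BddAbove {r | ∃ Δ : Fin k → ℝ, Δ ≠ 0 ∧ zs + Δ ∈ fenchelDom f ∧
      r = Real.sqrt (Δ ⬝ᵥ (B * Q * Bᵀ) *ᵥ Δ) / norm2 Δ} := by
    refine ⟨C, ?_⟩
    rintro _ ⟨Δ', hΔ', -, rfl⟩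
    rw [hratio, div_le_iff₀ (norm2_pos hΔ'), mulVec_mulVec]
    exact hC Δ'
  rcases eq_or_ne Δ 0 with rfl | hΔ0
  · simp [norm2]
  rw [← div_le_iff₀ (norm2_pos hΔ0), ← hratio]
  exact le_csSup hbdd ⟨Δ, hΔ0, hΔ, rfl⟩

end ConjugateDomain

lemma mul_norm2_sq_add_le {d k : ℕ} {P : Matrix (Fin d) (Fin d) ℝ} (hP : P.IsSymm)
    (hPP : IsIdempotentElem P) {μ lam : ℝ} (hμ : 0 < μ) (hlam : 0 < lam)
    {Δ : Fin k → ℝ} {x u y : Fin d → ℝ} (hco : Δ ⬝ᵥ Δ ≤ μ * (y ⬝ᵥ u))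
    (hu : lam • u = -(P *ᵥ y) - lam • ((1 - P) *ᵥ x)) :
    lam * norm2 Δ ^ 2 + μ * norm2 (P *ᵥ y) ^ 2 ≤ μ * lam * norm2 x * norm2 ((1 - P) *ᵥ y) := by
  have hyu : lam * (y ⬝ᵥ u) = -(P *ᵥ y ⬝ᵥ P *ᵥ y) - lam * ((1 - P) *ᵥ y ⬝ᵥ x) := by
    rw [← smul_eq_mul, ← dotProduct_smul, hu, dotProduct_sub, dotProduct_neg, dotProduct_smul,
      dotProduct_mulVec_self_of_isSymm hP hPP,
      dotProduct_mulVec_of_isSymm (isSymm_one.sub hP), smul_eq_mul]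
  have hCS : -((1 - P) *ᵥ y ⬝ᵥ x) ≤ norm2 ((1 - P) *ᵥ y) * norm2 x := by
    simpa [norm2_neg] using dotProduct_le_norm2_mul_norm2 (-((1 - P) *ᵥ y)) x
  rw [norm2_sq, norm2_sq]
  nlinarith [mul_le_mul_of_nonneg_left hco hlam.le,
    mul_le_mul_of_nonneg_left hCS (mul_pos hμ hlam).le]

lemma add_sq_le_of_mul_sq_add_le {μ lam Z q w t c : ℝ} (hμ : 0 < μ) (hlam : 0 < lam)
    (hZ : 2 * μ * Z ^ 2 ≤ lam) (hw : 0 ≤ w) (hwt : w ≤ Z * t)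
    (h : lam * t ^ 2 + μ * q ≤ μ * lam * c * w) : q + w ^ 2 ≤ lam * μ / 2 * (Z * c) ^ 2 := by
  have hw2 : w ^ 2 ≤ Z ^ 2 * t ^ 2 := by
    rw [← mul_pow]
    exact pow_le_pow_left₀ hw hwt 2
  rcases (sq_nonneg Z).eq_or_lt with hZ0 | hZpos
  · have hw0 : w = 0 := by nlinarith
    subst hw0
    rw [mul_pow, ← hZ0]
    nlinarith [mul_nonneg hlam.le (sq_nonneg t)]
  -- after multiplying by `μ Z²`: `λ w² ≤ λ Z² t²`, `μ Z² w² ≤ λ w² / 2` and AM-GM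
  refine le_of_mul_le_mul_left ?_ (mul_pos hμ hZpos)
  nlinarith [mul_le_mul_of_nonneg_left h hZpos.le, mul_le_mul_of_nonneg_left hw2 hlam.le,
    mul_le_mul_of_nonneg_right hZ (sq_nonneg w),
    mul_nonneg hlam.le (sq_nonneg (w - μ * Z ^ 2 * c))]

lemma inv_mul_sqrt_le_of_le {lam μ a b : ℝ} (hlam : 0 < lam) (hb : 0 ≤ b)
    (h : a ≤ lam * μ / 2 * b ^ 2) : lam⁻¹ * Real.sqrt a ≤ Real.sqrt (μ / (2 * lam)) * b := by
  calc lam⁻¹ * Real.sqrt a ≤ lam⁻¹ * Real.sqrt (lam ^ 2 * (μ / (2 * lam)) * b ^ 2) := by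
        gcongr
        exact h.trans_eq (by field_simp)
    _ = Real.sqrt (μ / (2 * lam)) * b := by
        rw [Real.sqrt_mul' _ (sq_nonneg b), Real.sqrt_mul (sq_nonneg lam), Real.sqrt_sq hlam.le,
          Real.sqrt_sq hb]
        field_simp

/-- deterministic bound via `Z_f`: if `λ ≥ 2 μ Z_f²`, then for any
minimizer `αs` of the sketched program, the approximate solution
`x̃ = -λ⁻¹ Aᵀ ∇f(A S αs)` satisfies `‖x̃ - x*‖₂ ≤ √(μ/(2λ)) Z_f ‖x*‖₂`. -/
theorem statement_2 {n d m : ℕ} (f : (Fin n → ℝ) → ℝ) (f' : (Fin n → ℝ) → Fin n → ℝ)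
    (A : Matrix (Fin n) (Fin d) ℝ) (μ lam : ℝ)
    (hμ : 0 < μ) (hlam : 0 < lam)
    (hconv : ConvexOn ℝ Set.univ f)
    (hdiff : ∀ w, HasFDerivAt f (dotCLM (f' w)) w)
    (hsmooth : ∀ w v, norm2 (f' w - f' v) ≤ μ * norm2 (w - v))
    (S : Matrix (Fin d) (Fin m) ℝ) (P : Matrix (Fin d) (Fin d) ℝ)
    (hP : IsOrthProj S P)
    (xs : Fin d → ℝ)
    (hxs : ∀ x, f (A.mulVec xs) + lam / 2 * norm2 xs ^ 2
        ≤ f (A.mulVec x) + lam / 2 * norm2 x ^ 2)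
    (hZ : 2 * μ * Zf f A (1 - P) (f' (A.mulVec xs)) ^ 2 ≤ lam)
    (αs : Fin m → ℝ)
    (hαs : ∀ α, f ((A * S).mulVec αs) + lam / 2 * norm2 (S.mulVec αs) ^ 2
        ≤ f ((A * S).mulVec α) + lam / 2 * norm2 (S.mulVec α) ^ 2) :
    norm2 (-(lam⁻¹ • Aᵀ.mulVec (f' ((A * S).mulVec αs))) - xs)
      ≤ Real.sqrt (μ / (2 * lam)) * Zf f A (1 - P) (f' (A.mulVec xs)) * norm2 xs := by
  set zs := f' (A *ᵥ xs)
  set Δ := f' ((A * S) *ᵥ αs) - zs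
  set y := Aᵀ *ᵥ Δ
  set Z := Zf f A (1 - P) zs
  have hprimal := transpose_mulVec_grad_eq_of_isMin hdiff hxs
  have hsketch := proj_transpose_mulVec_grad_eq_of_isMin hdiff hP hαs
  have hcoco : Δ ⬝ᵥ Δ ≤ μ * (y ⬝ᵥ (S *ᵥ αs - xs)) := by
    have h := dotProduct_grad_sub_le hμ hconv hdiff hsmooth (A *ᵥ xs) ((A * S) *ᵥ αs)
    rwa [← mulVec_mulVec, ← mulVec_sub, mulVec_mulVec, dotProduct_mulVec,
      ← mulVec_transpose] at h
  have henergy := mul_norm2_sq_add_le hP.isSymm hP.isIdempotentElem hμ hlam hcoco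
    (smul_sub_eq_of_optimality hprimal hsketch)
  have hZf : norm2 ((1 - P) *ᵥ y) ≤ Z * norm2 Δ :=
    norm2_mulVec_le_Zf_mul (isSymm_one.sub hP.isSymm) hP.isIdempotentElem.one_sub
      (by simpa [Δ] using grad_mem_fenchelDom hconv hdiff ((A * S) *ᵥ αs))
  have hbound := add_sq_le_of_mul_sq_add_le hμ hlam hZ (norm2_nonneg _) hZf henergy
  calc norm2 (-(lam⁻¹ • Aᵀ *ᵥ f' ((A * S) *ᵥ αs)) - xs)
      = lam⁻¹ * Real.sqrt (norm2 (P *ᵥ y) ^ 2 + norm2 ((1 - P) *ᵥ y) ^ 2) := by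
        rw [neg_inv_smul_sub_eq hlam.ne' hprimal, norm2_smul, abs_neg, abs_inv,
          abs_of_pos hlam, ← norm2_sq_eq_add_of_isSymm hP.isSymm hP.isIdempotentElem,
          Real.sqrt_sq (norm2_nonneg y)]
    _ ≤ Real.sqrt (μ / (2 * lam)) * (Z * norm2 xs) :=
        inv_mul_sqrt_le_of_le hlam (mul_nonneg (Zf_nonneg zs) (norm2_nonneg xs)) hbound
    _ = Real.sqrt (μ / (2 * lam)) * Z * norm2 xs := by ring

end Sketch
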